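/- In the random-amplification β-encoder, for every n ≥ 1 one has 0 ≤ x − Σ_{i=1}^n b_i / (∏_{j=1}^i β_j) ≤ κ / β_min^n; consequently the series Σ_{i=1}^∞ b_i / (∏_{j=1}^i β_j) converges and equals x. -/

import Mathlib

open MeasureTheory Filter Set Real

/-- Orbit of the random-amplification β-encoder: `rIter βs u x n` is the iterate `x_n`,
where `x_0 = x` and `x_n = βs_n · x_{n-1} − b_n`. -/
noncomputable def rIter (βs u : ℕ → ℝ) (x : ℝ) : ℕ → ℝ
  | 0 => x
  | n + 1 =>
      if βs (n + 1) * rIter βs u x n < u (n + 1) then βs (n + 1) * rIter βs u x n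
      else βs (n + 1) * rIter βs u x n - 1

/-- The bit `b_n` produced by the random-amplification β-encoder at step `n ≥ 1`. -/
noncomputable def rBit (βs u : ℕ → ℝ) (x : ℝ) (n : ℕ) : ℝ :=
  if βs n * rIter βs u x (n - 1) < u n then 0 else 1

/-!
Since `x_n = β_n x_{n-1} − b_n`, dividing by `β_1 ⋯ β_n` telescopes to
`x − Σ_{i ≤ n} b_i / (β_1 ⋯ β_i) = x_n / (β_1 ⋯ β_n)`. The thresholds `u_n ∈ [1, κ]` keep the orbit
in `[0, κ]`, because `κ` solves `β_max κ = κ + 1`: below the threshold `x_n < u_n ≤ κ`, above it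
`0 ≤ u_n − 1 ≤ x_n ≤ β_max κ − 1 = κ`. Hence the error lies in `[0, κ / β_min^n]`, which tends to `0`.
-/

theorem Finset.sum_Icc_one_eq_sum_range {M : Type*} [AddCommMonoid M] (f : ℕ → M) (n : ℕ) :
    ∑ i ∈ Finset.Icc 1 n, f i = ∑ i ∈ Finset.range n, f (i + 1) := by
  rw [← Finset.Ico_add_one_right_eq_Icc, Finset.sum_Ico_eq_sum_range]
  simp only [add_tsub_cancel_right, add_comm]

theorem hasSum_of_nonneg_of_sub_sum_range_mem_Icc {f g : ℕ → ℝ} {a : ℝ} (hf : ∀ i, 0 ≤ f i)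
    (hsub : ∀ n, a - ∑ i ∈ Finset.range n, f i ∈ Icc 0 (g n))
    (hg : Tendsto g atTop (nhds 0)) : HasSum f a := by
  rw [hasSum_iff_tendsto_nat_of_nonneg hf]
  have hsub0 := squeeze_zero (fun n => (hsub n).1) (fun n => (hsub n).2) hg
  simpa using (tendsto_const_nhds (x := a)).sub hsub0

theorem pow_le_prod_Icc_one {βs : ℕ → ℝ} {c : ℝ} (hc : 0 ≤ c) (hβs : ∀ n, 1 ≤ n → c ≤ βs n)
    (n : ℕ) : c ^ n ≤ ∏ j ∈ Finset.Icc 1 n, βs j := by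
  calc c ^ n = ∏ _j ∈ Finset.Icc 1 n, c := by simp
    _ ≤ ∏ j ∈ Finset.Icc 1 n, βs j :=
      Finset.prod_le_prod (fun _ _ => hc) fun j hj => hβs j (Finset.mem_Icc.1 hj).1

section Encoder

variable (βs u : ℕ → ℝ) (x : ℝ)

theorem rIter_succ (n : ℕ) :
    rIter βs u x (n + 1) = βs (n + 1) * rIter βs u x n - rBit βs u x (n + 1) := by
  simp only [rIter, rBit, Nat.add_sub_cancel]
  split_ifs <;> ring

theorem rBit_nonneg (n : ℕ) : 0 ≤ rBit βs u x n := by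
  unfold rBit
  split_ifs <;> norm_num

variable {βs u x}

theorem rIter_mem_Icc {β₁ κ : ℝ} (hκ : β₁ * κ ≤ κ + 1) (hβs : ∀ n, 1 ≤ n → βs n ∈ Icc 0 β₁)
    (hu : ∀ n, 1 ≤ n → u n ∈ Icc 1 κ) (hx : x ∈ Icc 0 κ) (n : ℕ) :
    rIter βs u x n ∈ Icc 0 κ := by
  induction n with
  | zero => exact hx
  | succ n ih =>
    obtain ⟨hβ0, hβ1⟩ := hβs (n + 1) n.succ_pos
    obtain ⟨hu1, huκ⟩ := hu (n + 1) n.succ_pos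
    have hprod_nonneg : 0 ≤ βs (n + 1) * rIter βs u x n := mul_nonneg hβ0 ih.1
    have hprod_le : βs (n + 1) * rIter βs u x n ≤ β₁ * κ :=
      mul_le_mul hβ1 ih.2 ih.1 (hβ0.trans hβ1)
    simp only [rIter]
    split_ifs with hbelow
    · exact ⟨hprod_nonneg, by linarith⟩
    · constructor <;> linarith

theorem sub_sum_rBit_div_prod (hβs : ∀ n, 1 ≤ n → βs n ≠ 0) (n : ℕ) :
    x - ∑ i ∈ Finset.Icc 1 n, rBit βs u x i / ∏ j ∈ Finset.Icc 1 i, βs j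
      = rIter βs u x n / ∏ j ∈ Finset.Icc 1 n, βs j := by
  induction n with
  | zero => simp [rIter]
  | succ n ih =>
    rw [Finset.sum_Icc_succ_top (by omega), ← sub_sub, ih, rIter_succ,
      Finset.prod_Icc_succ_top (by omega)]
    field_simp [hβs (n + 1) n.succ_pos]

theorem sub_sum_rBit_div_prod_mem_Icc {βmin β₁ κ : ℝ} (hβmin : 0 < βmin) (hκ : β₁ * κ ≤ κ + 1)
    (hβs : ∀ n, 1 ≤ n → βs n ∈ Icc βmin β₁) (hu : ∀ n, 1 ≤ n → u n ∈ Icc 1 κ)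
    (hx : x ∈ Icc 0 κ) (n : ℕ) :
    x - ∑ i ∈ Finset.Icc 1 n, rBit βs u x i / ∏ j ∈ Finset.Icc 1 i, βs j
      ∈ Icc 0 (κ / βmin ^ n) := by
  have hβpos : ∀ n, 1 ≤ n → 0 < βs n := fun n hn => hβmin.trans_le (hβs n hn).1
  have horbit := rIter_mem_Icc hκ (fun n hn => ⟨(hβpos n hn).le, (hβs n hn).2⟩) hu hx n
  have hpow : βmin ^ n ≤ ∏ j ∈ Finset.Icc 1 n, βs j :=
    pow_le_prod_Icc_one hβmin.le (fun j hj => (hβs j hj).1) n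
  rw [sub_sum_rBit_div_prod (fun n hn => (hβpos n hn).ne')]
  exact ⟨div_nonneg horbit.1 ((pow_nonneg hβmin.le n).trans hpow),
    div_le_div₀ (hx.1.trans hx.2) horbit.2 (pow_pos hβmin n) hpow⟩

end Encoder

/-- in the random-amplification β-encoder, for every `n ≥ 1` one has
`0 ≤ x − Σ_{i=1}^n b_i / (∏_{j=1}^i β_j) ≤ κ / β_min^n`; consequently the series
`Σ_{i=1}^∞ b_i / (∏_{j=1}^i β_j)` converges and equals `x`. -/
theorem stmt_12 (βmin βmax : ℝ) (h1 : 1 < βmin) (h2 : βmin ≤ βmax) (h3 : βmax < 2)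
    (βs u : ℕ → ℝ)
    (hβs : ∀ n, 1 ≤ n → βs n ∈ Set.Icc βmin βmax)
    (hu : ∀ n, 1 ≤ n → u n ∈ Set.Icc (1:ℝ) (βmax - 1)⁻¹)
    (x : ℝ) (hx : x ∈ Set.Icc (0:ℝ) 1) :
    (∀ n : ℕ, 1 ≤ n →
      0 ≤ x - ∑ i ∈ Finset.Icc 1 n, rBit βs u x i / ∏ j ∈ Finset.Icc 1 i, βs j ∧
      x - ∑ i ∈ Finset.Icc 1 n, rBit βs u x i / ∏ j ∈ Finset.Icc 1 i, βs j
        ≤ (βmax - 1)⁻¹ / βmin ^ n) ∧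
    HasSum (fun n : ℕ => rBit βs u x (n + 1) / ∏ j ∈ Finset.Icc 1 (n + 1), βs j) x := by
  set κ := (βmax - 1)⁻¹
  have hβmax : 0 < βmax - 1 := by linarith
  have hκ : βmax * κ = κ + 1 := by simp only [κ]; field_simp; ring
  have hκ1 : 1 ≤ κ := (one_le_inv₀ hβmax).2 (by linarith)
  have herror := sub_sum_rBit_div_prod_mem_Icc (by linarith) hκ.le hβs hu ⟨hx.1, hx.2.trans hκ1⟩
  have hterm_nonneg (i : ℕ) : 0 ≤ rBit βs u x (i + 1) / ∏ j ∈ Finset.Icc 1 (i + 1), βs j :=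
    div_nonneg (rBit_nonneg βs u x _) (Finset.prod_nonneg fun j hj =>
      (zero_le_one.trans h1.le).trans (hβs j (Finset.mem_Icc.1 hj).1).1)
  refine ⟨fun n _ => herror n, hasSum_of_nonneg_of_sub_sum_range_mem_Icc hterm_nonneg ?_
    (g := fun n => κ / βmin ^ n) ?_⟩
  · simpa only [Finset.sum_Icc_one_eq_sum_range] using herror
  · simpa only [div_eq_mul_inv, inv_pow, mul_zero] using
      (tendsto_pow_atTop_nhds_zero_of_lt_one (by positivity) (inv_lt_one_of_one_lt₀ h1)).const_mul κ
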